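/- Let F_q be a finite field with gcd(q, 6) = 1. Then P_l(F_q[S₃]) = ((2q-1)/q²)² · ((q⁴ + 3q³ - 2q² - 2q + 1)/q⁷), where P_l(R) = |{(a,b) ∈ R² : ab = 0}|/|R|². -/

import Mathlib

/-!
Over a field of characteristic prime to 6 the group algebra of `S₃` is split semisimple:
the trivial, sign and two-dimensional standard representations give an algebra isomorphism
`F[S₃] ≃ F × F × M₂(F)` (surjective by Fourier inversion, hence bijective by counting).
The probability that a product vanishes is multiplicative over products of rings, so it remains
to count zero products in `F` and in `M₂(F)`. In `M₂(F)` the right annihilator of `A` consists of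
the matrices whose columns lie in `ker A`, so it has `q ^ (2 * (2 - rank A))` elements, and summing
over the `1`, `q⁴ - 1 - |GL₂(F)|` and `|GL₂(F)|` matrices of rank `0`, `1` and `2` gives
`q⁵ + 3q⁴ - 2q³ - 2q² + q` zero products.
-/

noncomputable def zeroProb (R : Type*) [Ring R] : ℚ :=
  (Nat.card {p : R × R // p.1 * p.2 = 0} : ℚ) / (Nat.card R : ℚ) ^ 2

open Finset Matrix

lemma natCast_ne_zero_of_coprime_card {R : Type*} [Ring R] [Fintype R] [Nontrivial R] {n : ℕ}
    (h : Nat.Coprime (Fintype.card R) n) : (n : R) ≠ 0 := by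
  intro hn
  have hdvd : ringChar R ∣ Nat.gcd (Fintype.card R) n :=
    Nat.dvd_gcd (ringChar.dvd (Nat.cast_card_eq_zero R)) (ringChar.dvd hn)
  exact CharP.ringChar_ne_one (Nat.dvd_one.mp (h ▸ hdvd))

lemma card_monoidAlgebra (R G : Type*) [Semiring R] [Finite G] :
    Nat.card (MonoidAlgebra R G) = Nat.card R ^ Nat.card G := by
  rw [Nat.card_congr (MonoidAlgebra.coeffEquiv.trans Finsupp.equivFunOnFinite), Nat.card_fun]

lemma Matrix.natCard_eq (m n α : Type*) [Finite m] [Finite n] :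
    Nat.card (Matrix m n α) = Nat.card α ^ (Nat.card m * Nat.card n) := by
  rw [Nat.card_congr Matrix.of.symm, Nat.card_fun, Nat.card_fun, ← pow_mul, mul_comm]

lemma zeroProb_congr {R S : Type*} [Ring R] [Ring S] (e : R ≃+* S) :
    zeroProb R = zeroProb S := by
  have e₂ : {p : R × R // p.1 * p.2 = 0} ≃ {p : S × S // p.1 * p.2 = 0} :=
    (e.toEquiv.prodCongr e.toEquiv).subtypeEquiv fun p => by simp [← map_mul]
  rw [zeroProb, zeroProb, Nat.card_congr e.toEquiv, Nat.card_congr e₂]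

lemma zeroProb_prod (R S : Type*) [Ring R] [Ring S] :
    zeroProb (R × S) = zeroProb R * zeroProb S := by
  have e : {p : (R × S) × (R × S) // p.1 * p.2 = 0} ≃
      {p : R × R // p.1 * p.2 = 0} × {p : S × S // p.1 * p.2 = 0} :=
    { toFun := fun p => (⟨(p.1.1.1, p.1.2.1), congrArg Prod.fst p.2⟩,
        ⟨(p.1.1.2, p.1.2.2), congrArg Prod.snd p.2⟩)
      invFun := fun p => ⟨((p.1.1.1, p.2.1.1), (p.1.1.2, p.2.1.2)), Prod.ext p.1.2 p.2.2⟩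
      left_inv := fun _ => rfl
      right_inv := fun _ => rfl }
  rw [zeroProb, zeroProb, zeroProb, Nat.card_congr e, Nat.card_prod, Nat.card_prod]
  push_cast
  ring

lemma card_mul_eq_zero_eq_sum (R : Type*) [Mul R] [Zero R] [Fintype R] :
    Nat.card {p : R × R // p.1 * p.2 = 0} = ∑ a : R, Nat.card {b : R // a * b = 0} := by
  rw [Nat.card_congr (Equiv.subtypeProdEquivSigmaSubtype fun a b : R => a * b = 0),
    Nat.card_sigma]

lemma zeroProb_of_noZeroDivisors (R : Type*) [Ring R] [NoZeroDivisors R] [Fintype R] :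
    zeroProb R = (2 * Fintype.card R - 1) / (Fintype.card R : ℚ) ^ 2 := by
  classical
  have hann : ∀ a : R, (Nat.card {b : R // a * b = 0} : ℚ) =
      1 + if a = 0 then (Fintype.card R - 1 : ℚ) else 0 := by
    intro a
    split_ifs with ha <;> simp [ha]
  rw [zeroProb, card_mul_eq_zero_eq_sum, Nat.card_eq_fintype_card]
  push_cast
  simp only [hann, sum_add_distrib, sum_ite_eq', mem_univ, if_true, sum_const, card_univ]
  ring

section MatrixAnnihilator

variable {K : Type*} [Field K] {m n : Type*} [Fintype n]

lemma Matrix.mul_eq_zero_iff_forall_mulVec_col (A : Matrix m n K) {ι : Type*}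
    (B : Matrix n ι K) : A * B = 0 ↔ ∀ j, A *ᵥ Bᵀ j = 0 := by
  simp only [← Matrix.ext_iff, funext_iff, Matrix.mul_apply, Matrix.mulVec, dotProduct,
    Matrix.transpose_apply, Matrix.zero_apply, Pi.zero_apply]
  exact forall_comm

lemma Matrix.card_mul_eq_zero_right (A : Matrix m n K) (ι : Type*) [Fintype ι] :
    Nat.card {B : Matrix n ι K // A * B = 0} =
      Nat.card (LinearMap.ker A.mulVecLin) ^ Fintype.card ι := by
  have e : {B : Matrix n ι K // A * B = 0} ≃ (ι → LinearMap.ker A.mulVecLin) :=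
    ((transposeAddEquiv n ι K).toEquiv.subtypeEquiv A.mul_eq_zero_iff_forall_mulVec_col).trans
      (Equiv.subtypePiEquivPi (p := fun _ v => A.mulVecLin v = 0))
  rw [Nat.card_congr e, Nat.card_fun, Nat.card_eq_fintype_card (α := ι)]

lemma Matrix.card_ker_mulVecLin [Fintype K] (A : Matrix m n K) :
    Nat.card (LinearMap.ker A.mulVecLin) = Fintype.card K ^ (Fintype.card n - A.rank) := by
  have hrk := A.mulVecLin.finrank_range_add_finrank_ker
  rw [Module.finrank_fintype_fun_eq_card] at hrk
  rw [Module.natCard_eq_pow_finrank (K := K), Nat.card_eq_fintype_card, Matrix.rank]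
  congr 1
  omega

lemma Matrix.rank_eq_zero_iff (A : Matrix m n K) : A.rank = 0 ↔ A = 0 := by
  classical
  rw [Matrix.rank, Submodule.finrank_eq_zero, LinearMap.range_eq_bot, ← Matrix.toLin'_apply',
    LinearEquiv.map_eq_zero_iff]

lemma Matrix.rank_eq_card_iff_isUnit [DecidableEq n] (A : Matrix n n K) :
    A.rank = Fintype.card n ↔ IsUnit A := by
  refine ⟨fun h => ?_, A.rank_of_isUnit⟩
  rw [← Matrix.mulVec_surjective_iff_isUnit, ← Matrix.coe_mulVecLin, ← LinearMap.range_eq_top]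
  apply Submodule.eq_top_of_finrank_eq
  rwa [Module.finrank_fintype_fun_eq_card]

end MatrixAnnihilator

section MatrixFinTwo

variable {K : Type*} [Field K] [Fintype K]

lemma Matrix.card_mul_eq_zero_right_fin_two [DecidableEq K] (A : Matrix (Fin 2) (Fin 2) K) :
    (Nat.card {B : Matrix (Fin 2) (Fin 2) K // A * B = 0} : ℚ) =
      (Fintype.card K : ℚ) ^ 2 - ((Fintype.card K : ℚ) ^ 2 - 1) * (if IsUnit A then 1 else 0) +
        (if A = 0 then (Fintype.card K : ℚ) ^ 4 - (Fintype.card K : ℚ) ^ 2 else 0) := by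
  have hunit := A.rank_eq_card_iff_isUnit
  have hzero := A.rank_eq_zero_iff
  have hle := A.rank_le_card_width
  rw [A.card_mul_eq_zero_right, A.card_ker_mulVecLin]
  simp only [Fintype.card_fin] at *
  interval_cases hr : A.rank
  · rw [if_neg (by simp [← hunit]), if_pos (hzero.1 rfl)]
    push_cast
    ring
  · rw [if_neg (by simp [← hunit]), if_neg (by simp [← hzero])]
    push_cast
    ring
  · rw [if_pos (hunit.1 rfl), if_neg (by simp [← hzero])]
    push_cast
    ring

lemma zeroProb_matrix_fin_two :
    zeroProb (Matrix (Fin 2) (Fin 2) K) =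
      ((Fintype.card K : ℚ) ^ 4 + 3 * (Fintype.card K : ℚ) ^ 3 - 2 * (Fintype.card K : ℚ) ^ 2 -
        2 * (Fintype.card K : ℚ) + 1) / (Fintype.card K : ℚ) ^ 7 := by
  classical
  have hGL : Nat.card (GL (Fin 2) K) = #{A : Matrix (Fin 2) (Fin 2) K | IsUnit A} := by
    rw [← Fintype.card_subtype, ← Nat.card_eq_fintype_card]
    exact Nat.card_congr (Equiv.ofInjective _ Units.val_injective)
  have hcard : Fintype.card (Matrix (Fin 2) (Fin 2) K) = Fintype.card K ^ 4 := by
    simp only [← Nat.card_eq_fintype_card, Matrix.natCard_eq, Nat.card_fin]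
  have hq : 1 ≤ Fintype.card K := Fintype.card_pos
  have h1 : 1 ≤ Fintype.card K ^ 2 := Nat.one_le_pow _ _ hq
  have h2 : Fintype.card K ≤ Fintype.card K ^ 2 := Nat.le_self_pow two_ne_zero _
  rw [zeroProb, card_mul_eq_zero_eq_sum, Nat.card_eq_fintype_card, hcard]
  push_cast
  simp only [Matrix.card_mul_eq_zero_right_fin_two, sum_add_distrib, sum_sub_distrib, ← mul_sum,
    sum_boole, ← hGL, Matrix.card_GL_field, Fin.prod_univ_two, sum_ite_eq', mem_univ, if_true,
    sum_const, card_univ, hcard]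
  push_cast [Fin.val_zero, Fin.val_one, pow_zero, pow_one, Nat.cast_sub h1, Nat.cast_sub h2,
    nsmul_eq_mul]
  field_simp
  ring

end MatrixFinTwo

section WedderburnS3

/-- The standard representation of `S₃` on `{x ∈ ℤ³ | x₀ + x₁ + x₂ = 0}`, in the basis
`e₀ - e₁, e₁ - e₂`: the coordinates of a vector in this basis are its partial sums `x₀, x₀ + x₁`. -/
def stdRepInt : Equiv.Perm (Fin 3) →* Matrix (Fin 2) (Fin 2) ℤ where
  toFun g := Matrix.of fun i j =>
    (if g j.castSucc ≤ i.castSucc then 1 else 0) - (if g j.succ ≤ i.castSucc then 1 else 0)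
  map_one' := by decide
  map_mul' := by decide

variable (F : Type*) [Field F]

def s3Rep : Equiv.Perm (Fin 3) →* F × F × Matrix (Fin 2) (Fin 2) F :=
  MonoidHom.prod 1 <| MonoidHom.prod
    ((Int.castRingHom F).toMonoidHom.comp ((Units.coeHom ℤ).comp Equiv.Perm.sign))
    ((Int.castRingHom F).mapMatrix.toMonoidHom.comp stdRepInt)

lemma s3Rep_apply (g : Equiv.Perm (Fin 3)) :
    s3Rep F g = (1, ((Equiv.Perm.sign g : ℤ) : F), (stdRepInt g).map (↑)) := rfl

noncomputable def s3Wedderburn :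
    MonoidAlgebra F (Equiv.Perm (Fin 3)) →ₐ[F] F × F × Matrix (Fin 2) (Fin 2) F :=
  MonoidAlgebra.lift F _ (Equiv.Perm (Fin 3)) (s3Rep F)

open Equiv in
lemma s3Wedderburn_surjective (h6 : (6 : F) ≠ 0) : Function.Surjective (s3Wedderburn F) := by
  rintro ⟨s, t, m⟩
  -- Fourier inversion: the coefficient of `g` is `(s + sign g * t + 2 * tr (stdRepInt g⁻¹ * m)) / 6`.
  refine ⟨MonoidAlgebra.single 1 ((s + t + 2 * m 0 0 + 2 * m 1 1) / 6)
    + MonoidAlgebra.single (swap 1 2) ((s - t + 2 * m 0 0 + 2 * m 0 1 - 2 * m 1 1) / 6)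
    + MonoidAlgebra.single (swap 0 1) ((s - t - 2 * m 0 0 + 2 * m 1 0 + 2 * m 1 1) / 6)
    + MonoidAlgebra.single (swap 0 1 * swap 1 2) ((s + t - 2 * m 0 0 - 2 * m 0 1 + 2 * m 1 0) / 6)
    + MonoidAlgebra.single (swap 1 2 * swap 0 1) ((s + t + 2 * m 0 1 - 2 * m 1 0 - 2 * m 1 1) / 6)
    + MonoidAlgebra.single (swap 0 2) ((s - t - 2 * m 0 1 - 2 * m 1 0) / 6), ?_⟩
  have h₁ : ((Perm.sign (swap (1 : Fin 3) 2) : ℤ), stdRepInt (swap 1 2)) =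
      (-1, !![1, 0; 1, -1]) := by decide
  have h₂ : ((Perm.sign (swap (0 : Fin 3) 1) : ℤ), stdRepInt (swap 0 1)) =
      (-1, !![-1, 1; 0, 1]) := by decide
  have h₃ : ((Perm.sign (swap (0 : Fin 3) 1 * swap 1 2) : ℤ), stdRepInt (swap 0 1 * swap 1 2)) =
      (1, !![0, -1; 1, -1]) := by decide
  have h₄ : ((Perm.sign (swap (1 : Fin 3) 2 * swap 0 1) : ℤ), stdRepInt (swap 1 2 * swap 0 1)) =
      (1, !![-1, 1; -1, 0]) := by decide
  have h₅ : ((Perm.sign (swap (0 : Fin 3) 2) : ℤ), stdRepInt (swap 0 2)) =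
      (-1, !![0, -1; -1, 0]) := by decide
  simp only [Prod.ext_iff] at h₁ h₂ h₃ h₄ h₅
  refine Prod.ext ?_ (Prod.ext ?_ (Matrix.ext fun i j => ?_))
  rotate_left 2
  fin_cases i <;> fin_cases j
  all_goals
    simp only [s3Wedderburn, map_add, MonoidAlgebra.lift_single, s3Rep_apply, map_one,
      h₁, h₂, h₃, h₄, h₅, Fin.isValue, Int.reduceNeg, Int.cast_neg, Int.cast_one, Int.cast_zero,
      Prod.smul_mk, smul_eq_mul, mul_one, mul_neg, mul_zero, add_zero, zero_add, Prod.fst_add,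
      Prod.snd_add, Prod.smul_fst, Prod.smul_snd, Prod.fst_one, Prod.snd_one, Matrix.add_apply,
      Matrix.smul_apply, Matrix.one_apply_eq, Matrix.one_apply_ne, ne_eq, zero_ne_one,
      one_ne_zero, not_false_eq_true, Matrix.map_apply, Matrix.of_apply, Matrix.cons_val',
      Matrix.cons_val_zero, Matrix.cons_val_one, Matrix.cons_val_fin_one, Fin.zero_eta,
      Fin.mk_one, Nat.reduceAdd]
    field_simp
    ring

lemma s3Wedderburn_bijective [Fintype F] (h6 : (6 : F) ≠ 0) :
    Function.Bijective (s3Wedderburn F) := by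
  have hcard : Nat.card (MonoidAlgebra F (Equiv.Perm (Fin 3))) =
      Nat.card (F × F × Matrix (Fin 2) (Fin 2) F) := by
    rw [card_monoidAlgebra, Nat.card_perm, Nat.card_prod, Nat.card_prod, Matrix.natCard_eq]
    simp only [Nat.card_fin, Nat.factorial]
    ring
  have : Finite (MonoidAlgebra F (Equiv.Perm (Fin 3))) :=
    Nat.finite_of_card_ne_zero (by rw [hcard]; exact Nat.card_pos.ne')
  exact (s3Wedderburn_surjective F h6).bijective_of_nat_card_le hcard.le

end WedderburnS3

theorem left_prob_FS3 (F : Type*) [Field F] [Fintype F]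
    (h : Nat.gcd (Fintype.card F) 6 = 1) :
    zeroProb (MonoidAlgebra F (Equiv.Perm (Fin 3))) =
      ((2 * (Fintype.card F : ℚ) - 1) / (Fintype.card F : ℚ) ^ 2) ^ 2 *
        (((Fintype.card F : ℚ) ^ 4 + 3 * (Fintype.card F : ℚ) ^ 3 -
          2 * (Fintype.card F : ℚ) ^ 2 - 2 * (Fintype.card F : ℚ) + 1) /
          (Fintype.card F : ℚ) ^ 7) := by
  have h6 : (6 : F) ≠ 0 := mod_cast natCast_ne_zero_of_coprime_card (n := 6) h
  rw [zeroProb_congr (RingEquiv.ofBijective (s3Wedderburn F) (s3Wedderburn_bijective F h6)),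
    zeroProb_prod, zeroProb_prod, zeroProb_of_noZeroDivisors, zeroProb_matrix_fin_two]
  ring
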